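/- Let {g_n} be a sequence of nonnegative functions in L¹(ℝ^N) with sup_n ∫ g_n dx < ∞, and suppose the measures g_n dx converge weakly-* to a finite Borel measure μ on ℝ^N, i.e. ∫ φ g_n dx → ∫ φ dμ for every continuous compactly supported φ : ℝ^N → ℝ. Then the quantity g_∞ := lim_{R→∞} limsup_{n→∞} ∫_{{x : |x|>R}} g_n dx is well defined (the limit in R exists), and limsup_{n→∞} ∫_{ℝ^N} g_n dx = μ(ℝ^N) + g_∞. -/

import Mathlib

/-!
Split `g_n = ψ g_n + (1 - ψ) g_n` with a bump `ψ` equal to `1` on the ball of radius `r` and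
vanishing outside the ball of radius `r'`. By weak-* convergence `∫ ψ g_n → ∫ ψ dμ`, while
`∫ (1 - ψ) g_n` is squeezed between `∫_{|x|>r'} g_n` and `∫_{|x|>r} g_n`. With
`T(R) = limsup_n ∫_{|x|>R} g_n`, this gives `∫ ψ dμ + T(r') ≤ limsup_n ∫ g_n ≤ ∫ ψ dμ + T(r)`.
Being antitone and nonnegative, `T` converges as `R → ∞`, and `∫ ψ dμ → μ(ℝ^N)` by dominated
convergence as both radii tend to infinity.
-/

open MeasureTheory Filter Topology Metric Real
open scoped ENNReal

noncomputable section

/-- Euclidean space `ℝ^N`. -/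
abbrev EN (N : ℕ) := EuclideanSpace ℝ (Fin N)

theorem limsup_add_of_tendsto_left {ι : Type*} {l : Filter ι} [l.NeBot] {u v : ι → ℝ} {a : ℝ}
    (hu : Tendsto u l (𝓝 a)) (hv : IsBoundedUnder (· ≤ ·) l v)
    (hv' : IsBoundedUnder (· ≥ ·) l v) :
    limsup (u + v) l = a + limsup v l := by
  apply le_antisymm
  · have h := limsup_add_le hu.isBoundedUnder_ge hu.isBoundedUnder_le hv'.isCoboundedUnder_le hv
    rwa [hu.limsup_eq] at h
  · have h := le_limsup_add hv hv'.isCoboundedUnder_le hu.isBoundedUnder_le hu.isBoundedUnder_ge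
    rwa [hu.liminf_eq, add_comm v, add_comm (limsup v l)] at h

theorem limsup_le_limsup_of_forall_le {ι : Type*} {l : Filter ι} [l.NeBot] {u v : ι → ℝ} {m M : ℝ}
    (huv : ∀ i, u i ≤ v i) (hu : ∀ i, m ≤ u i) (hv : ∀ i, v i ≤ M) : limsup u l ≤ limsup v l :=
  limsup_le_limsup (Eventually.of_forall huv) (isCoboundedUnder_le_of_le l hu)
    (isBoundedUnder_of ⟨M, hv⟩)

theorem setIntegral_le_of_integral_le {X : Type*} [MeasurableSpace X] {ν : Measure X}
    {g : ℕ → X → ℝ} {M : ℝ} (hg_nonneg : ∀ n x, 0 ≤ g n x)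
    (hg_int : ∀ n, Integrable (g n) ν) (hM : ∀ n, ∫ x, g n x ∂ν ≤ M) (s : Set X) (n : ℕ) :
    ∫ x in s, g n x ∂ν ≤ M :=
  (setIntegral_le_integral (hg_int n) (ae_of_all _ (hg_nonneg n))).trans (hM n)

section TailMass

variable {E : Type*} [NormedAddCommGroup E] [MeasurableSpace E] {ν : Measure E}
  {g : ℕ → E → ℝ} {M : ℝ}

def tailMass (g : ℕ → E → ℝ) (ν : Measure E) (R : ℝ) : ℝ :=
  limsup (fun n => ∫ x in {x | R < ‖x‖}, g n x ∂ν) atTop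

theorem tailMass_nonneg (hg_nonneg : ∀ n x, 0 ≤ g n x) (hg_int : ∀ n, Integrable (g n) ν)
    (hM : ∀ n, ∫ x, g n x ∂ν ≤ M) (R : ℝ) : 0 ≤ tailMass g ν R :=
  le_limsup_of_frequently_le (Frequently.of_forall fun n => integral_nonneg (hg_nonneg n))
    (isBoundedUnder_of ⟨M, setIntegral_le_of_integral_le hg_nonneg hg_int hM _⟩)

theorem tailMass_antitone (hg_nonneg : ∀ n x, 0 ≤ g n x) (hg_int : ∀ n, Integrable (g n) ν)
    (hM : ∀ n, ∫ x, g n x ∂ν ≤ M) : Antitone (tailMass g ν) := fun _ _ hRR' =>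
  limsup_le_limsup_of_forall_le
    (fun n => setIntegral_mono_set (hg_int n).integrableOn (ae_of_all _ (hg_nonneg n))
      (LE.le.eventuallyLE fun _ hx => hRR'.trans_lt hx))
    (fun n => integral_nonneg (hg_nonneg n)) (setIntegral_le_of_integral_le hg_nonneg hg_int hM _)

theorem tendsto_tailMass (hg_nonneg : ∀ n x, 0 ≤ g n x) (hg_int : ∀ n, Integrable (g n) ν)
    (hM : ∀ n, ∫ x, g n x ∂ν ≤ M) :
    Tendsto (tailMass g ν) atTop (𝓝 (⨅ R, tailMass g ν R)) :=
  tendsto_atTop_ciInf (tailMass_antitone hg_nonneg hg_int hM)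
    ⟨0, Set.forall_mem_range.2 (tailMass_nonneg hg_nonneg hg_int hM)⟩

end TailMass

section Bump

variable {E : Type*} [NormedAddCommGroup E] [NormedSpace ℝ E] [HasContDiffBump E]
  [MeasurableSpace E] {ν : Measure E} {g : ℕ → E → ℝ} {M : ℝ} (f : ContDiffBump (0 : E))

theorem integrable_bump_mul [OpensMeasurableSpace E] {h : E → ℝ} (hh : Integrable h ν) :
    Integrable (fun x => f x * h x) ν :=
  hh.bdd_mul (c := 1) f.continuous.aestronglyMeasurable
    (ae_of_all _ fun x => by rw [Real.norm_of_nonneg f.nonneg]; exact f.le_one)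

theorem integrable_one_sub_bump_mul [OpensMeasurableSpace E] {h : E → ℝ}
    (hh : Integrable h ν) : Integrable (fun x => (1 - f x) * h x) ν :=
  hh.bdd_mul (c := 1) (continuous_const.sub f.continuous).aestronglyMeasurable
    (ae_of_all _ fun x => by
      rw [Real.norm_of_nonneg (sub_nonneg.2 f.le_one)]; linarith [f.nonneg (x := x)])

theorem integral_one_sub_bump_mul_nonneg (hg_nonneg : ∀ n x, 0 ≤ g n x) (n : ℕ) :
    0 ≤ ∫ x, (1 - f x) * g n x ∂ν :=
  integral_nonneg fun x => mul_nonneg (sub_nonneg.2 f.le_one) (hg_nonneg n x)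

theorem integral_one_sub_bump_mul_le [OpensMeasurableSpace E] (hg_nonneg : ∀ n x, 0 ≤ g n x)
    (hg_int : ∀ n, Integrable (g n) ν) (hM : ∀ n, ∫ x, g n x ∂ν ≤ M) (n : ℕ) :
    ∫ x, (1 - f x) * g n x ∂ν ≤ M :=
  (integral_mono (integrable_one_sub_bump_mul f (hg_int n)) (hg_int n) fun x =>
    mul_le_of_le_one_left (hg_nonneg n x) (by linarith [f.nonneg (x := x)])).trans (hM n)

theorem setIntegral_rOut_lt_norm_le_integral_one_sub_bump_mul [OpensMeasurableSpace E]
    (hg_nonneg : ∀ n x, 0 ≤ g n x) (hg_int : ∀ n, Integrable (g n) ν) (n : ℕ) :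
    ∫ x in {x | f.rOut < ‖x‖}, g n x ∂ν ≤ ∫ x, (1 - f x) * g n x ∂ν := by
  have hvanish : ∀ x ∈ {x : E | f.rOut < ‖x‖}, (1 - f x) * g n x = g n x := fun x hx => by
    rw [f.zero_of_le_dist (by simpa using hx.le), sub_zero, one_mul]
  rw [← setIntegral_congr_fun (measurableSet_lt measurable_const measurable_norm) hvanish]
  exact setIntegral_le_integral (integrable_one_sub_bump_mul f (hg_int n))
    (ae_of_all _ fun x => mul_nonneg (sub_nonneg.2 f.le_one) (hg_nonneg n x))

theorem integral_one_sub_bump_mul_le_setIntegral_rIn_lt_norm [OpensMeasurableSpace E]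
    (hg_nonneg : ∀ n x, 0 ≤ g n x) (hg_int : ∀ n, Integrable (g n) ν) (n : ℕ) :
    ∫ x, (1 - f x) * g n x ∂ν ≤ ∫ x in {x | f.rIn < ‖x‖}, g n x ∂ν := by
  have hS : MeasurableSet {x : E | f.rIn < ‖x‖} := measurableSet_lt measurable_const measurable_norm
  have hinner : ∀ x ∉ {x : E | f.rIn < ‖x‖}, (1 - f x) * g n x = 0 := fun x hx => by
    rw [f.one_of_mem_closedBall (by simpa using hx), sub_self, zero_mul]
  rw [← setIntegral_eq_integral_of_forall_compl_eq_zero hinner]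
  exact setIntegral_mono_on (integrable_one_sub_bump_mul f (hg_int n)).integrableOn
    (hg_int n).integrableOn hS fun x _ =>
      mul_le_of_le_one_left (hg_nonneg n x) (by linarith [f.nonneg (x := x)])

theorem limsup_integral_eq_integral_bump_add [OpensMeasurableSpace E]
    (hg_nonneg : ∀ n x, 0 ≤ g n x) (hg_int : ∀ n, Integrable (g n) ν)
    (hM : ∀ n, ∫ x, g n x ∂ν ≤ M) (μ : Measure E)
    (hconv : Tendsto (fun n => ∫ x, f x * g n x ∂ν) atTop (𝓝 (∫ x, f x ∂μ))) :
    limsup (fun n => ∫ x, g n x ∂ν) atTop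
      = ∫ x, f x ∂μ + limsup (fun n => ∫ x, (1 - f x) * g n x ∂ν) atTop := by
  have hsplit : (fun n => ∫ x, g n x ∂ν)
      = (fun n => ∫ x, f x * g n x ∂ν) + fun n => ∫ x, (1 - f x) * g n x ∂ν := by
    ext n
    rw [Pi.add_apply, ← integral_add (integrable_bump_mul f (hg_int n))
      (integrable_one_sub_bump_mul f (hg_int n))]
    simp only [← add_mul, add_sub_cancel, one_mul]
  rw [hsplit]
  exact limsup_add_of_tendsto_left hconv
    (isBoundedUnder_of ⟨M, integral_one_sub_bump_mul_le f hg_nonneg hg_int hM⟩)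
    (isBoundedUnder_of ⟨0, integral_one_sub_bump_mul_nonneg f hg_nonneg⟩)

theorem integral_bump_add_tailMass_rOut_le_limsup_integral [OpensMeasurableSpace E]
    (hg_nonneg : ∀ n x, 0 ≤ g n x) (hg_int : ∀ n, Integrable (g n) ν)
    (hM : ∀ n, ∫ x, g n x ∂ν ≤ M) (μ : Measure E)
    (hconv : Tendsto (fun n => ∫ x, f x * g n x ∂ν) atTop (𝓝 (∫ x, f x ∂μ))) :
    ∫ x, f x ∂μ + tailMass g ν f.rOut ≤ limsup (fun n => ∫ x, g n x ∂ν) atTop := by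
  rw [limsup_integral_eq_integral_bump_add f hg_nonneg hg_int hM μ hconv]
  gcongr
  exact limsup_le_limsup_of_forall_le
    (setIntegral_rOut_lt_norm_le_integral_one_sub_bump_mul f hg_nonneg hg_int)
    (fun n => integral_nonneg (hg_nonneg n)) (integral_one_sub_bump_mul_le f hg_nonneg hg_int hM)

theorem limsup_integral_le_integral_bump_add_tailMass_rIn [OpensMeasurableSpace E]
    (hg_nonneg : ∀ n x, 0 ≤ g n x) (hg_int : ∀ n, Integrable (g n) ν)
    (hM : ∀ n, ∫ x, g n x ∂ν ≤ M) (μ : Measure E)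
    (hconv : Tendsto (fun n => ∫ x, f x * g n x ∂ν) atTop (𝓝 (∫ x, f x ∂μ))) :
    limsup (fun n => ∫ x, g n x ∂ν) atTop ≤ ∫ x, f x ∂μ + tailMass g ν f.rIn := by
  rw [limsup_integral_eq_integral_bump_add f hg_nonneg hg_int hM μ hconv]
  gcongr
  exact limsup_le_limsup_of_forall_le
    (integral_one_sub_bump_mul_le_setIntegral_rIn_lt_norm f hg_nonneg hg_int)
    (integral_one_sub_bump_mul_nonneg f hg_nonneg)
    (setIntegral_le_of_integral_le hg_nonneg hg_int hM _)

end Bump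

section NatBump

variable {E : Type*} [NormedAddCommGroup E] [NormedSpace ℝ E] [HasContDiffBump E]

def natBump (k : ℕ) : ContDiffBump (0 : E) := ⟨k + 1, k + 2, by positivity, by linarith⟩

theorem tendsto_integral_natBump [MeasurableSpace E] [OpensMeasurableSpace E] (μ : Measure E)
    [IsFiniteMeasure μ] :
    Tendsto (fun k => ∫ x, (natBump k : ContDiffBump (0 : E)) x ∂μ) atTop
      (𝓝 (μ.real Set.univ)) := by
  have hlim : ∀ x : E, Tendsto (fun k => (natBump k : ContDiffBump (0 : E)) x) atTop (𝓝 1) :=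
    fun x => tendsto_const_nhds.congr' <| (eventually_ge_atTop ⌈‖x‖⌉₊).mono fun k hk => by
      have hx : ‖x‖ ≤ k := (Nat.le_ceil ‖x‖).trans (by exact_mod_cast hk)
      exact ((natBump k).one_of_mem_closedBall (by simp [natBump]; linarith)).symm
  simpa using tendsto_integral_of_dominated_convergence (fun _ => (1 : ℝ))
    (fun k => (natBump k).continuous.aestronglyMeasurable) (integrable_const 1)
    (fun k => ae_of_all _ fun x => by
      rw [Real.norm_of_nonneg (natBump k).nonneg]; exact (natBump k).le_one)
    (ae_of_all _ hlim)

end NatBump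

theorem mass_at_infinity
    (N : ℕ)
    (g : ℕ → EN N → ℝ)
    (hg_nonneg : ∀ n, ∀ x : EN N, 0 ≤ g n x)
    (hg_int : ∀ n, Integrable (g n) (volume : Measure (EN N)))
    (hg_bd : ∃ M : ℝ, ∀ n, (∫ x, g n x) ≤ M)
    (μ : Measure (EN N)) [IsFiniteMeasure μ]
    (hconv : ∀ φ : EN N → ℝ, Continuous φ → HasCompactSupport φ →
      Tendsto (fun n => ∫ x, φ x * g n x) atTop (𝓝 (∫ x, φ x ∂μ))) :
    ∃ gInf : ℝ,
      Tendsto (fun R : ℝ =>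
          limsup (fun n => ∫ x in {x : EN N | R < ‖x‖}, g n x) atTop) atTop (𝓝 gInf) ∧
      limsup (fun n => ∫ x, g n x) atTop = (μ Set.univ).toReal + gInf := by
  obtain ⟨M, hM⟩ := hg_bd
  have hconv_bump (k : ℕ) := hconv _ (natBump k).continuous (natBump k).hasCompactSupport
  have htail := tendsto_tailMass hg_nonneg hg_int hM
  have hk : Tendsto (fun k : ℕ => (k : ℝ)) atTop atTop := tendsto_natCast_atTop_atTop
  have hμ := tendsto_integral_natBump μ
  refine ⟨_, htail, le_antisymm ?_ ?_⟩
  · exact ge_of_tendsto' (hμ.add (htail.comp (tendsto_atTop_add_const_right _ 1 hk))) fun k =>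
      limsup_integral_le_integral_bump_add_tailMass_rIn _ hg_nonneg hg_int hM μ (hconv_bump k)
  · exact le_of_tendsto' (hμ.add (htail.comp (tendsto_atTop_add_const_right _ 2 hk))) fun k =>
      integral_bump_add_tailMass_rOut_le_limsup_integral _ hg_nonneg hg_int hM μ (hconv_bump k)
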